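/- arXiv:math/0202246 — 6 statements merged into one kernel-verified Lean document; each statement's English description precedes it below -/
import Mathlib

section
/- The index (number of negative eigenvalues) of the 2×2 real symmetric matrix [[c1+1, -1],[-1, c2+1]] equals the number of t ∈ (0, ∞) such that (c1+t)(c2+t) + (c1+t) + (c2+t) = 0, counted with multiplicity, provided the matrix is nonsingular. -/
/-!
The polynomial `(t + c₁)(t + c₂) + (t + c₁) + (t + c₂) = (t + c₁ + 1)(t + c₂ + 1) - 1` is
`det (t + M)`, i.e. the characteristic polynomial of `M` evaluated at `-t`. Its roots are therefore
the negatives of the eigenvalues of `M`, counted with multiplicity, and the positive roots are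
exactly the negatives of the negative eigenvalues.
-/

open Polynomial

namespace Matrix

lemma charpoly_fin_two_comp_neg_X {R : Type*} [CommRing R] [Nontrivial R]
    (A : Matrix (Fin 2) (Fin 2) R) :
    A.charpoly.comp (-X) = X ^ 2 + C A.trace * X + C A.det := by
  rw [charpoly_fin_two]
  simp only [sub_comp, add_comp, mul_comp, pow_comp, X_comp, C_comp]
  ring

lemma IsHermitian.card_eigenvalues_neg_eq_card_roots_charpoly_comp_neg_X
    {n : Type*} [Fintype n] [DecidableEq n] {A : Matrix n n ℝ} (hA : A.IsHermitian) :
    (Finset.univ.filter fun i => hA.eigenvalues i < 0).card =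
      Multiset.card ((A.charpoly.comp (-X)).roots.filter fun t => 0 < t) := by
  rw [roots_comp_neg_X, hA.roots_charpoly_eq_eigenvalues, Multiset.map_map,
    Multiset.filter_map, Multiset.card_map]
  simp [Finset.card_def, Finset.filter_val]

end Matrix

theorem index_eq_positive_root_count_general (c1 c2 : ℝ)
    (M : Matrix (Fin 2) (Fin 2) ℝ)
    (hMdef : M = !![c1 + 1, -1; -1, c2 + 1])
    (hM : M.IsHermitian) :
    (Finset.univ.filter fun i => hM.eigenvalues i < 0).card =
      Multiset.card
        ((((X + C c1) * (X + C c2) + (X + C c1) + (X + C c2) : Polynomial ℝ)).roots.filter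
          fun t => 0 < t) := by
  have hpoly : ((X + C c1) * (X + C c2) + (X + C c1) + (X + C c2) : ℝ[X]) =
      M.charpoly.comp (-X) := by
    rw [M.charpoly_fin_two_comp_neg_X, hMdef, Matrix.trace_fin_two_of, Matrix.det_fin_two_of]
    simp only [C_add, C_mul, C_sub, C_neg, C_1]
    ring
  rw [hpoly, hM.card_eigenvalues_neg_eq_card_roots_charpoly_comp_neg_X]

/-- The index (number of negative eigenvalues) of the nonsingular 2×2 real symmetric
matrix `[[c1+1,-1],[-1,c2+1]]` equals the number of roots `t ∈ (0,∞)` of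
`(c1+t)(c2+t) + (c1+t) + (c2+t)`, counted with multiplicity. -/
theorem index_eq_positive_root_count (c1 c2 : ℝ)
    (hns : (c1 + 1) * (c2 + 1) ≠ 1)
    (M : Matrix (Fin 2) (Fin 2) ℝ)
    (hMdef : M = !![c1 + 1, -1; -1, c2 + 1])
    (hM : M.IsHermitian) :
    (Finset.univ.filter fun i => hM.eigenvalues i < 0).card =
      Multiset.card
        ((((X + C c1) * (X + C c2) + (X + C c1) + (X + C c2) : Polynomial ℝ)).roots.filter
          fun t => 0 < t) :=
  index_eq_positive_root_count_general c1 c2 M hMdef hM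
end

section
/- The Lawrence-Krammer matrices satisfy the braid relations: for the linear maps ρ(σ_i) on the free module with basis v_{j,k} (1 ≤ j < k ≤ n) defined by the explicit formulas, one has ρ(σ_i)ρ(σ_{i+1})ρ(σ_i) = ρ(σ_{i+1})ρ(σ_i)ρ(σ_{i+1}) for 1 ≤ i ≤ n-2, and ρ(σ_i)ρ(σ_j) = ρ(σ_j)ρ(σ_i) for |i-j| ≥ 2. -/
open LaurentPolynomial

/-- Index set for the Lawrence-Krammer basis: pairs `(j,k)` with `0 ≤ j < k ≤ n-1`
(0-based indexing of the punctures). -/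
def LKIdx (n : ℕ) := {p : Fin n × Fin n // p.1 < p.2}

instance (n : ℕ) : Fintype (LKIdx n) := by unfold LKIdx; infer_instance
instance (n : ℕ) : DecidableEq (LKIdx n) := by unfold LKIdx; infer_instance

/-- Kronecker delta on a pair of indices. -/
def lkDelta {R : Type*} [CommRing R] (a b x y : ℕ) : R :=
  if a = x ∧ b = y then 1 else 0

/-- The coefficient of `v_{a,b}` in `ρ(σ_i)·v_{j,k}` (0-based indices), following the
explicit formula for the Lawrence-Krammer representation:
`ρ(σ_i)v_{j,k} = v_{j,k}` if `i ∉ {j-1,j,k-1,k}`;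
`q v_{i,k} + (q²-q) v_{i,j} + (1-q) v_{j,k}` if `i = j-1`;
`v_{j+1,k}` if `i = j ≠ k-1`; `q v_{j,i} + (1-q) v_{j,k} - (q²-q)t v_{i,k}` if `i = k-1 ≠ j`;
`v_{j,k+1}` if `i = k`; `-tq² v_{j,k}` if `i = j = k-1`. -/
def lkEntry {R : Type*} [CommRing R] (q t : R) (i a b j k : ℕ) : R :=
  if i + 1 = j then
    q * lkDelta a b i k + (q ^ 2 - q) * lkDelta a b i j + (1 - q) * lkDelta a b j k
  else if i = j ∧ i + 1 = k then -(t * q ^ 2) * lkDelta a b j k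
  else if i = j then lkDelta a b (j + 1) k
  else if i + 1 = k then
    q * lkDelta a b j i + (1 - q) * lkDelta a b j k - (q ^ 2 - q) * t * lkDelta a b i k
  else if i = k then lkDelta a b j (k + 1)
  else lkDelta a b j k

/-- The matrix of `ρ(σ_i)` on the free module with basis `v_{j,k}`, `0 ≤ j < k < n`. -/
def lkMat {R : Type*} [CommRing R] (q t : R) (n : ℕ) (i : ℕ) :
    Matrix (LKIdx n) (LKIdx n) R :=
  fun p p' => lkEntry q t i p.1.1 p.1.2 p'.1.1 p'.1.2

/-- The Laurent polynomial ring `ℤ[q^{±1}, t^{±1}]`. -/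
abbrev LKRing : Type := LaurentPolynomial (LaurentPolynomial ℤ)

/-- The variable `q` in `ℤ[q^{±1}, t^{±1}]`. -/
noncomputable def qLK : LKRing := T 1

/-- The variable `t` in `ℤ[q^{±1}, t^{±1}]`. -/
noncomputable def tLK : LKRing := C (T 1)

/-!
Column `(j, k)` of `lkMat q t n i` is `ρ(σ_i) v_{j,k}`, so row `p` of a product of such matrices
is the coordinate functional `v_p^*` pulled back successively along the `ρ(σ_i)`. On functionals,
written as functions `ℕ → ℕ → R`, this pullback `lkComap q t i` is given by one formula that does
not depend on `n`, and the braid relations become identities between polynomial expressions in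
finitely many values of the functional, checked by splitting on the position of `(j, k)` relative
to the generators involved. Truncating to `n` punctures is harmless: when `i + 2 ≤ n`, `ρ(σ_i)` maps
basis vectors `v_{j,k}` with `k < n` to combinations of such vectors.
-/

variable {R : Type*} [CommRing R]

/-- Precomposition with `ρ(σ_i)`, where `f` stands for the functional `v_{j,k} ↦ f j k`. -/
def lkComap (q t : R) (i : ℕ) : (ℕ → ℕ → R) →ₗ[R] ℕ → ℕ → R where
  toFun f j k :=
    if i + 1 = j then q * f i k + (q ^ 2 - q) * f i j + (1 - q) * f j k
    else if i = j ∧ i + 1 = k then -(t * q ^ 2) * f j k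
    else if i = j then f (j + 1) k
    else if i + 1 = k then q * f j i + (1 - q) * f j k - (q ^ 2 - q) * t * f i k
    else if i = k then f j (k + 1)
    else f j k
  map_add' f g := by ext j k; simp only [Pi.add_apply]; split_ifs <;> ring
  map_smul' c f := by
    ext j k; simp only [Pi.smul_apply, smul_eq_mul, RingHom.id_apply]; split_ifs <;> ring

theorem lkComap_apply (q t : R) (i : ℕ) (f : ℕ → ℕ → R) (j k : ℕ) :
    lkComap q t i f j k =
      if i + 1 = j then q * f i k + (q ^ 2 - q) * f i j + (1 - q) * f j k
      else if i = j ∧ i + 1 = k then -(t * q ^ 2) * f j k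
      else if i = j then f (j + 1) k
      else if i + 1 = k then q * f j i + (1 - q) * f j k - (q ^ 2 - q) * t * f i k
      else if i = k then f j (k + 1)
      else f j k :=
  rfl

theorem lkComap_braid (q t : R) (i : ℕ) (f : ℕ → ℕ → R) {j k : ℕ} (hjk : j < k) :
    lkComap q t i (lkComap q t (i + 1) (lkComap q t i f)) j k =
      lkComap q t (i + 1) (lkComap q t i (lkComap q t (i + 1) f)) j k := by
  rcases (show i = j ∨ i + 1 = j ∨ i + 2 = j ∨ (i ≠ j ∧ i + 1 ≠ j ∧ i + 2 ≠ j) by omega) with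
    rfl | rfl | rfl | ⟨hj₀, hj₁, hj₂⟩ <;>
  rcases (show i = k ∨ i + 1 = k ∨ i + 2 = k ∨ (i ≠ k ∧ i + 1 ≠ k ∧ i + 2 ≠ k) by omega) with
    rfl | rfl | rfl | ⟨hk₀, hk₁, hk₂⟩ <;>
  simp only [lkComap_apply, add_assoc, Nat.reduceAdd, Nat.add_left_cancel_iff, Nat.add_eq_left,
    Nat.left_eq_add, one_ne_zero, OfNat.ofNat_ne_zero, OfNat.ofNat_ne_one, OfNat.one_ne_ofNat,
    and_self, and_true, and_false, ↓reduceIte, *] <;>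
  first | omega | ring

theorem lkComap_comm (q t : R) {i i' : ℕ} (h : i + 2 ≤ i') (f : ℕ → ℕ → R) {j k : ℕ}
    (hjk : j < k) :
    lkComap q t i (lkComap q t i' f) j k = lkComap q t i' (lkComap q t i f) j k := by
  have hii' : i ≠ i' ∧ i' ≠ i ∧ i + 1 ≠ i' ∧ i' ≠ i + 1 ∧ i ≠ i' + 1 ∧ i' + 1 ≠ i := by omega
  rcases (show i = j ∨ i + 1 = j ∨ i' = j ∨ i' + 1 = j ∨
      (i ≠ j ∧ i + 1 ≠ j ∧ i' ≠ j ∧ i' + 1 ≠ j) by omega) with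
    rfl | rfl | rfl | rfl | ⟨hj₀, hj₁, hj₂, hj₃⟩ <;>
  rcases (show i = k ∨ i + 1 = k ∨ i' = k ∨ i' + 1 = k ∨
      (i ≠ k ∧ i + 1 ≠ k ∧ i' ≠ k ∧ i' + 1 ≠ k) by omega) with
    rfl | rfl | rfl | rfl | ⟨hk₀, hk₁, hk₂, hk₃⟩ <;>
  simp only [lkComap_apply, add_assoc, Nat.add_right_cancel_iff, Nat.add_eq_left, one_ne_zero,
    and_self, and_true, and_false, ↓reduceIte, *] <;>
  first | omega | ring

theorem lkMat_apply (q t : R) (n i : ℕ) (p p' : LKIdx n) :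
    lkMat q t n i p p' = lkComap q t i (lkDelta p.1.1 p.1.2) p'.1.1 p'.1.2 :=
  rfl

variable {n : ℕ}

def lkExtend (v : LKIdx n → R) : ℕ → ℕ → R :=
  ∑ p, v p • lkDelta p.1.1 p.1.2

theorem lkExtend_apply (v : LKIdx n → R) (p : LKIdx n) : lkExtend v p.1.1 p.1.2 = v p := by
  have hδ : ∀ p' ≠ p, v p' • lkDelta (R := R) p'.1.1 p'.1.2 p.1.1 p.1.2 = 0 := by
    intro p' hp'
    have : ¬((p'.1.1 : ℕ) = p.1.1 ∧ (p'.1.2 : ℕ) = p.1.2) := fun ⟨h₁, h₂⟩ =>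
      hp' (Subtype.ext (Prod.ext (Fin.ext h₁) (Fin.ext h₂)))
    simp [lkDelta, this]
  simp only [lkExtend, Finset.sum_apply, Pi.smul_apply]
  rw [Fintype.sum_eq_single p hδ]
  simp [lkDelta]

theorem mul_lkMat_apply (q t : R) (i : ℕ) (M : Matrix (LKIdx n) (LKIdx n) R) (p p' : LKIdx n) :
    (M * lkMat q t n i) p p' = lkComap q t i (lkExtend (M p)) p'.1.1 p'.1.2 := by
  simp only [Matrix.mul_apply, lkMat_apply, lkExtend, map_sum, map_smul, Finset.sum_apply,
    Pi.smul_apply, smul_eq_mul]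

theorem lkComap_congr (q t : R) {i : ℕ} (hi : i + 2 ≤ n) {f g : ℕ → ℕ → R}
    (hfg : ∀ p : LKIdx n, f p.1.1 p.1.2 = g p.1.1 p.1.2) (p : LKIdx n) :
    lkComap q t i f p.1.1 p.1.2 = lkComap q t i g p.1.1 p.1.2 := by
  obtain ⟨⟨⟨j, hj⟩, ⟨k, hk⟩⟩, hjk : j < k⟩ := p
  have h : ∀ x y, x < y → y < n → f x y = g x y := fun x y hxy hy =>
    hfg ⟨(⟨x, hxy.trans hy⟩, ⟨y, hy⟩), hxy⟩
  simp only [lkComap_apply]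
  split_ifs <;> simp (disch := omega) only [h]

theorem mul_lkMat_apply_of_row (q t : R) {i : ℕ} (hi : i + 2 ≤ n)
    {M : Matrix (LKIdx n) (LKIdx n) R} {p : LKIdx n} {f : ℕ → ℕ → R}
    (hM : ∀ p', M p p' = f p'.1.1 p'.1.2) (p' : LKIdx n) :
    (M * lkMat q t n i) p p' = lkComap q t i f p'.1.1 p'.1.2 := by
  rw [mul_lkMat_apply]
  exact lkComap_congr q t hi (fun p'' => by rw [lkExtend_apply, hM]) p'

theorem lkMat_braid (q t : R) {i : ℕ} (hi : i + 3 ≤ n) :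
    lkMat q t n i * lkMat q t n (i + 1) * lkMat q t n i =
      lkMat q t n (i + 1) * lkMat q t n i * lkMat q t n (i + 1) := by
  ext p p'
  rw [mul_lkMat_apply_of_row q t (by omega)
      (mul_lkMat_apply_of_row q t (by omega) (lkMat_apply q t n i p)),
    mul_lkMat_apply_of_row q t (by omega)
      (mul_lkMat_apply_of_row q t (by omega) (lkMat_apply q t n (i + 1) p))]
  exact lkComap_braid q t i _ p'.2

theorem lkMat_comm (q t : R) {i j : ℕ} (hij : i + 2 ≤ j) (hj : j + 2 ≤ n) :
    lkMat q t n i * lkMat q t n j = lkMat q t n j * lkMat q t n i := by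
  ext p p'
  rw [mul_lkMat_apply_of_row q t hj (lkMat_apply q t n i p),
    mul_lkMat_apply_of_row q t (by omega) (lkMat_apply q t n j p)]
  exact (lkComap_comm q t hij _ p'.2).symm

/-- The Lawrence-Krammer matrices over `ℤ[q^{±1},t^{±1}]` satisfy the braid relations.
Generators are 0-indexed: `σ_i` for `0 ≤ i ≤ n-2`. -/
theorem lk_braid_relations (n : ℕ) :
    (∀ i : ℕ, i + 3 ≤ n →
      lkMat qLK tLK n i * lkMat qLK tLK n (i + 1) * lkMat qLK tLK n i =
        lkMat qLK tLK n (i + 1) * lkMat qLK tLK n i * lkMat qLK tLK n (i + 1)) ∧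
    (∀ i j : ℕ, i + 2 ≤ j → j + 2 ≤ n →
      lkMat qLK tLK n i * lkMat qLK tLK n j = lkMat qLK tLK n j * lkMat qLK tLK n i) :=
  ⟨fun _ hi => lkMat_braid qLK tLK hi, fun _ _ hij hj => lkMat_comm qLK tLK hij hj⟩
end

section
/- Each Lawrence-Krammer matrix ρ(σ_i) is invertible over ℤ[q^{±1}, t^{±1}]. -/
open LaurentPolynomial

-- inverse entries
def lkEntryInv {R : Type*} [CommRing R] (qi ti : R) (i a b j k : ℕ) : R :=
  if i + 1 = j then lkDelta a b i k
  else if i = j ∧ i + 1 = k then -(ti * qi ^ 2) * lkDelta a b j k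
  else if i = j then
    qi * lkDelta a b (j + 1) k + ((1 - qi) * lkDelta a b j k +
      ((qi - qi ^ 2) * ti) * lkDelta a b i (i + 1))
  else if i + 1 = k then lkDelta a b j i
  else if i = k then
    qi * lkDelta a b j (k + 1) + ((1 - qi) * lkDelta a b j k +
      (-(qi - qi ^ 2)) * lkDelta a b i (i + 1))
  else lkDelta a b j k

def lkMatInv {R : Type*} [CommRing R] (qi ti : R) (n : ℕ) (i : ℕ) :
    Matrix (LKIdx n) (LKIdx n) R :=
  fun p p' => lkEntryInv qi ti i p.1.1 p.1.2 p'.1.1 p'.1.2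

section lemmas
variable {R : Type*} [CommRing R] (q t qi ti : R) (i a b : ℕ)

-- column evaluations of lkEntry
lemma lkE1 {k : ℕ} (hk : i + 1 < k) :
    lkEntry q t i a b i k = lkDelta a b (i + 1) k := by
  rw [lkEntry, if_neg (by omega), if_neg (by omega), if_pos rfl]

lemma lkE2 (k : ℕ) :
    lkEntry q t i a b (i + 1) k
      = q * lkDelta a b i k + (q ^ 2 - q) * lkDelta a b i (i + 1)
        + (1 - q) * lkDelta a b (i + 1) k := by
  rw [lkEntry, if_pos rfl]

lemma lkE3 : lkEntry q t i a b i (i + 1) = -(t * q ^ 2) * lkDelta a b i (i + 1) := by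
  rw [lkEntry, if_neg (by omega), if_pos ⟨rfl, rfl⟩]

lemma lkE4 {x : ℕ} (hx : x < i) :
    lkEntry q t i a b x i = lkDelta a b x (i + 1) := by
  rw [lkEntry, if_neg (by omega), if_neg (by omega), if_neg (by omega),
    if_neg (by omega), if_pos rfl]

lemma lkE5 {x : ℕ} (hx : x < i) :
    lkEntry q t i a b x (i + 1)
      = q * lkDelta a b x i + (1 - q) * lkDelta a b x (i + 1)
        - (q ^ 2 - q) * t * lkDelta a b i (i + 1) := by
  rw [lkEntry, if_neg (by omega), if_neg (by omega), if_neg (by omega), if_pos rfl]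

lemma lkE6 {x y : ℕ} (h1 : i + 1 ≠ x) (h2 : i ≠ x) (h3 : i + 1 ≠ y) (h4 : i ≠ y) :
    lkEntry q t i a b x y = lkDelta a b x y := by
  rw [lkEntry, if_neg h1, if_neg (by tauto), if_neg h2, if_neg h3, if_neg h4]

-- column evaluations of lkEntryInv
lemma lkF1 (k : ℕ) : lkEntryInv qi ti i a b (i + 1) k = lkDelta a b i k := by
  rw [lkEntryInv, if_pos rfl]

lemma lkF2 : lkEntryInv qi ti i a b i (i + 1)
    = -(ti * qi ^ 2) * lkDelta a b i (i + 1) := by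
  rw [lkEntryInv, if_neg (by omega), if_pos ⟨rfl, rfl⟩]

lemma lkF3 {k : ℕ} (hk : i + 1 < k) :
    lkEntryInv qi ti i a b i k
      = qi * lkDelta a b (i + 1) k + ((1 - qi) * lkDelta a b i k +
          ((qi - qi ^ 2) * ti) * lkDelta a b i (i + 1)) := by
  rw [lkEntryInv, if_neg (by omega), if_neg (by omega), if_pos rfl]

lemma lkF4 {x : ℕ} (hx : x < i) :
    lkEntryInv qi ti i a b x (i + 1) = lkDelta a b x i := by
  rw [lkEntryInv, if_neg (by omega), if_neg (by omega), if_neg (by omega), if_pos rfl]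

lemma lkF5 {x : ℕ} (hx : x < i) :
    lkEntryInv qi ti i a b x i
      = qi * lkDelta a b x (i + 1) + ((1 - qi) * lkDelta a b x i +
          (-(qi - qi ^ 2)) * lkDelta a b i (i + 1)) := by
  rw [lkEntryInv, if_neg (by omega), if_neg (by omega), if_neg (by omega),
    if_neg (by omega), if_pos rfl]

lemma lkF6 {x y : ℕ} (h1 : i + 1 ≠ x) (h2 : i ≠ x) (h3 : i + 1 ≠ y) (h4 : i ≠ y) :
    lkEntryInv qi ti i a b x y = lkDelta a b x y := by
  rw [lkEntryInv, if_neg h1, if_neg (by tauto), if_neg h2, if_neg h3, if_neg h4]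

end lemmas

lemma lk_sum_delta {R : Type*} [CommRing R] {n : ℕ} (f : LKIdx n → R) {x y : ℕ}
    (hy : y < n) (hxy : x < y) :
    ∑ c : LKIdx n, f c * lkDelta (c.1.1 : ℕ) (c.1.2 : ℕ) x y
      = f ⟨(⟨x, hxy.trans hy⟩, ⟨y, hy⟩), hxy⟩ := by
  have h := Finset.sum_eq_single (s := (Finset.univ : Finset (LKIdx n)))
    (f := fun c : LKIdx n => f c * lkDelta (c.1.1 : ℕ) (c.1.2 : ℕ) x y)
    (⟨(⟨x, hxy.trans hy⟩, ⟨y, hy⟩), hxy⟩ : LKIdx n)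
    (fun c _ hne => by
      have hc : ¬((c.1.1 : ℕ) = x ∧ (c.1.2 : ℕ) = y) := by
        rintro ⟨h1, h2⟩
        exact hne (Subtype.ext (Prod.ext (Fin.ext h1) (Fin.ext h2)))
      simp only [lkDelta, if_neg hc, mul_zero])
    (fun h => absurd (Finset.mem_univ _) h)
  rw [h]
  simp [lkDelta]

lemma lk_one_apply {R : Type*} [CommRing R] {n : ℕ} (p p' : LKIdx n) :
    (1 : Matrix (LKIdx n) (LKIdx n) R) p p'
      = lkDelta (p.1.1 : ℕ) (p.1.2 : ℕ) (p'.1.1 : ℕ) (p'.1.2 : ℕ) := by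
  rw [Matrix.one_apply]
  simp only [lkDelta]
  by_cases h : p = p'
  · rw [if_pos h, if_pos (by rw [h]; exact ⟨rfl, rfl⟩)]
  · rw [if_neg h, if_neg]
    rintro ⟨h1, h2⟩
    exact h (Subtype.ext (Prod.ext (Fin.ext h1) (Fin.ext h2)))

lemma lk_mul_inv {R : Type*} [CommRing R] (q t qi ti : R) (hq : q * qi = 1)
    (ht : t * ti = 1) (n i : ℕ) (hi : i + 2 ≤ n) :
    lkMat q t n i * lkMatInv qi ti n i = 1 := by
  have hin : i + 1 < n := by omega
  have hii : (i : ℕ) < i + 1 := by omega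
  ext p p'
  rw [Matrix.mul_apply, lk_one_apply]
  obtain ⟨⟨a, b⟩, hab⟩ := p
  obtain ⟨⟨⟨x, hx⟩, ⟨y, hy⟩⟩, hxy'⟩ := p'
  have hxy : x < y := hxy'
  simp only [lkMat, lkMatInv, Fin.val_mk]
  by_cases hx1 : i + 1 = x
  · -- column (i+1, y)
    subst hx1
    simp only [lkF1]
    rw [lk_sum_delta _ hy (show i < y by omega)]
    simp only [Fin.val_mk]
    rw [lkE1 q t i _ _ (show i + 1 < y by omega)]
  · by_cases hx2 : i = x
    · subst hx2
      by_cases hy1 : i + 1 = y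
      · -- column (i, i+1)
        subst hy1
        simp only [lkF2, ← mul_assoc]
        rw [lk_sum_delta _ hy hii]
        simp only [Fin.val_mk]
        rw [lkE3]
        linear_combination (t * ti * q * qi + t * ti) * lkDelta (a : ℕ) (b : ℕ) i (i + 1) * hq
          + lkDelta (a : ℕ) (b : ℕ) i (i + 1) * ht
      · -- column (i, y), i+1 < y
        have hy2 : i + 1 < y := by omega
        simp only [lkF3 qi ti i _ _ hy2, mul_add, ← mul_assoc]
        rw [Finset.sum_add_distrib, Finset.sum_add_distrib]
        rw [lk_sum_delta _ hy (show i + 1 < y by omega),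
            lk_sum_delta _ hy (show i < y by omega),
            lk_sum_delta _ hin hii]
        simp only [Fin.val_mk]
        rw [lkE2, lkE1 q t i _ _ hy2, lkE3]
        linear_combination (lkDelta (a : ℕ) (b : ℕ) i y - lkDelta (a : ℕ) (b : ℕ) (i + 1) y
            + q * qi * t * ti * lkDelta (a : ℕ) (b : ℕ) i (i + 1)) * hq
          + (q * qi * (1 - q) * lkDelta (a : ℕ) (b : ℕ) i (i + 1)) * ht
    · by_cases hy1 : i + 1 = y
      · -- column (x, i+1), x < i
        subst hy1
        have hxi : x < i := by omega
        simp only [lkF4 qi ti i _ _ hxi]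
        rw [lk_sum_delta _ (show i < n by omega) hxi]
        simp only [Fin.val_mk]
        rw [lkE4 q t i _ _ hxi]
      · by_cases hy2 : i = y
        · -- column (x, i), x < i
          subst hy2
          have hxi : x < i := hxy
          simp only [lkF5 qi ti i _ _ hxi, mul_add, ← mul_assoc]
          rw [Finset.sum_add_distrib, Finset.sum_add_distrib]
          rw [lk_sum_delta _ hin (show x < i + 1 by omega),
              lk_sum_delta _ (show i < n by omega) hxi,
              lk_sum_delta _ hin hii]
          simp only [Fin.val_mk]
          rw [lkE5 q t i _ _ hxi, lkE4 q t i _ _ hxi, lkE3]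
          linear_combination (lkDelta (a : ℕ) (b : ℕ) x i - lkDelta (a : ℕ) (b : ℕ) x (i + 1)
              - t * q * qi * lkDelta (a : ℕ) (b : ℕ) i (i + 1)) * hq
        · -- generic column
          simp only [lkF6 qi ti i _ _ hx1 hx2 hy1 hy2]
          rw [lk_sum_delta _ hy hxy]
          simp only [Fin.val_mk]
          rw [lkE6 q t i _ _ hx1 hx2 hy1 hy2]

/-- The inverse variable `q⁻¹`. -/
noncomputable def qiLK : LKRing := T (-1)

/-- The inverse variable `t⁻¹`. -/
noncomputable def tiLK : LKRing := C (T (-1))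

lemma qLK_mul_qiLK : qLK * qiLK = 1 := by
  rw [qLK, qiLK, ← T_add]
  norm_num [T_zero]

lemma tLK_mul_tiLK : tLK * tiLK = 1 := by
  rw [tLK, tiLK, ← map_mul, ← T_add]
  norm_num [T_zero]

/-- Each Lawrence-Krammer matrix `ρ(σ_i)` (`0 ≤ i ≤ n-2`, 0-indexed) is invertible
over `ℤ[q^{±1}, t^{±1}]`. -/
theorem lk_matrix_isUnit (n : ℕ) (i : ℕ) (hi : i + 2 ≤ n) :
    IsUnit (lkMat qLK tLK n i) := by
  have h := lk_mul_inv qLK tLK qiLK tiLK qLK_mul_qiLK tLK_mul_tiLK n i hi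
  letI := invertibleOfRightInverse _ _ h
  exact isUnit_of_invertible _
end

section
/- The matrix M indexed by pairs (i,j), (k,l) with 1 ≤ i < j ≤ n and 1 ≤ k < l ≤ n, defined by the given case formula, has nonzero determinant as an element of ℤ[q^{±1}, t^{±1}]. -/
open LaurentPolynomial

/-- The entry `M_{(i,j),(k,l)}` of the intersection-form matrix (indices satisfy
`i < j`, `k < l`): `(1-qt)(1+q²t)` if `k=i, j=l`; `-q²t²(q-1)` if `i=k<j<l` or `i<k<j=l`;
`-(q-1)` if `k=i<l<j` or `k<i<j=l`; `t(q-1)` if `i<j=k<l`; `q²t(q-1)` if `k<l=i<j`;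
`-t(q-1)²(1+qt)` if `i<k<j<l`; `(q-1)²(1+qt)` if `k<i<l<j`; `0` otherwise. -/
def lkFormEntry {R : Type*} [CommRing R] (q t : R) (i j k l : ℕ) : R :=
  if i = k ∧ j = l then (1 - q * t) * (1 + q ^ 2 * t)
  else if (i = k ∧ j < l) ∨ (i < k ∧ j = l) then -(q ^ 2 * t ^ 2 * (q - 1))
  else if (i = k ∧ l < j) ∨ (k < i ∧ j = l) then -(q - 1)
  else if j = k then t * (q - 1)
  else if l = i then q ^ 2 * t * (q - 1)
  else if i < k ∧ k < j ∧ j < l then -(t * (q - 1) ^ 2 * (1 + q * t))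
  else if k < i ∧ i < l ∧ l < j then (q - 1) ^ 2 * (1 + q * t)
  else 0

/-- The matrix `M` of intersection products, indexed by pairs `(i,j)` with `i < j`. -/
def lkFormMat {R : Type*} [CommRing R] (q t : R) (n : ℕ) :
    Matrix (LKIdx n) (LKIdx n) R :=
  fun p p' => lkFormEntry q t p.1.1 p.1.2 p'.1.1 p'.1.2

/-! Every off-diagonal entry of `M` carries a factor `q - 1`, so at `q = 1` the matrix becomes
the scalar matrix `(1 - t)(1 + t)`. Specialising further to `t = 2` sends `det M` to a power
of `-3`, which is nonzero. -/

section

variable {R S : Type*} [CommRing R] [CommRing S]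

lemma map_lkFormEntry (f : R →+* S) (q t : R) (i j k l : ℕ) :
    f (lkFormEntry q t i j k l) = lkFormEntry (f q) (f t) i j k l := by
  unfold lkFormEntry
  split_ifs <;> simp

lemma map_lkFormMat (f : R →+* S) (q t : R) (n : ℕ) :
    (lkFormMat q t n).map f = lkFormMat (f q) (f t) n := by
  ext p p'
  exact map_lkFormEntry f q t _ _ _ _

lemma lkFormEntry_one (t : R) (i j k l : ℕ) :
    lkFormEntry 1 t i j k l = if i = k ∧ j = l then (1 - t) * (1 + t) else 0 := by
  unfold lkFormEntry
  split_ifs <;> ring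

lemma lkFormMat_one (t : R) (n : ℕ) :
    lkFormMat 1 t n = Matrix.diagonal fun _ => (1 - t) * (1 + t) := by
  ext p p'
  simp only [lkFormMat, lkFormEntry_one, Matrix.diagonal_apply, Fin.val_inj, ← Prod.ext_iff]
  exact if_congr Subtype.val_inj rfl rfl

lemma det_lkFormMat_one (t : R) (n : ℕ) :
    (lkFormMat 1 t n).det = ((1 - t) * (1 + t)) ^ Fintype.card (LKIdx n) := by
  rw [lkFormMat_one, Matrix.det_diagonal, Finset.prod_const, Finset.card_univ]

lemma det_lkFormMat_ne_zero_of_map [IsDomain S] {q t : R} (n : ℕ) (f : R →+* S)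
    (hq : f q = 1) (ht : (1 - f t) * (1 + f t) ≠ 0) : (lkFormMat q t n).det ≠ 0 := by
  intro h
  have hf : ((lkFormMat q t n).map f).det = 0 := by
    rw [← RingHom.mapMatrix_apply, ← RingHom.map_det, h, map_zero]
  rw [map_lkFormMat, hq, det_lkFormMat_one] at hf
  exact pow_ne_zero _ ht hf

end

noncomputable def lkEvalOneTwo : LKRing →+* ℚ :=
  eval₂ (eval₂ (Int.castRingHom ℚ) (Units.mk0 2 two_ne_zero)) 1

lemma lkEvalOneTwo_qLK : lkEvalOneTwo qLK = 1 := by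
  simp [lkEvalOneTwo, qLK]

lemma lkEvalOneTwo_tLK : lkEvalOneTwo tLK = 2 := by
  simp [lkEvalOneTwo, tLK]

/-- The matrix `M` has nonzero determinant in `ℤ[q^{±1}, t^{±1}]`. -/
theorem lk_form_det_ne_zero (n : ℕ) : (lkFormMat qLK tLK n).det ≠ 0 :=
  det_lkFormMat_ne_zero_of_map n lkEvalOneTwo lkEvalOneTwo_qLK (by norm_num [lkEvalOneTwo_tLK])
end

section
/- In the expansion of det(M) as a sum over permutations of the index set of pairs, the term corresponding to the identity permutation equals ((1-qt)(1+q²t))^{C(n,2)}, and every other term is divisible by (q-1) in ℤ[q,t]; consequently det(M) ≠ 0 in ℤ[q^{±1}, t^{±1}]. -/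
open LaurentPolynomial

/-!
Every off-diagonal entry of `M` is a multiple of `q - 1`, so a permutation other than the
identity picks up a factor `q - 1` from any point it moves, while the identity contributes
the product of the diagonal entries `(1 - qt)(1 + q²t)`. For the same reason, specialising
`q = 1` turns `M` into a scalar matrix; at `t = 2` its determinant is `(-3)^C(n,2) ≠ 0`.
-/

def lkIdxEquivSigma (n : ℕ) : LKIdx n ≃ Σ j : Fin n, Fin j :=
  { toFun := fun p => ⟨p.1.2, ⟨p.1.1, p.2⟩⟩
    invFun := fun x => ⟨(⟨x.2, x.2.isLt.trans x.1.isLt⟩, x.1), x.2.isLt⟩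
    left_inv := fun _ => rfl
    right_inv := fun _ => rfl }

theorem card_lkIdx (n : ℕ) : Fintype.card (LKIdx n) = n.choose 2 := by
  rw [Fintype.card_congr (lkIdxEquivSigma n), Fintype.card_sigma]
  simp only [Fintype.card_fin]
  rw [Fin.sum_univ_eq_sum_range (fun i => i) n, Finset.sum_range_id, Nat.choose_two_right]

section DetTerms

variable {ι R : Type*} [Fintype ι] [DecidableEq ι] [CommRing R]

theorem Matrix.dvd_sign_smul_prod_of_ne_one {a : R} {A : Matrix ι ι R}
    (hA : ∀ i j, i ≠ j → a ∣ A i j) {σ : Equiv.Perm ι} (hσ : σ ≠ 1) :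
    a ∣ (Equiv.Perm.sign σ : ℤ) • ∏ i, A (σ i) i := by
  obtain ⟨i, hi⟩ : ∃ i, σ i ≠ i := not_forall.mp fun h => hσ (Equiv.ext h)
  rw [zsmul_eq_mul]
  have hfactor : A (σ i) i ∣ ∏ j, A (σ j) j :=
    Finset.dvd_prod_of_mem (fun j => A (σ j) j) (Finset.mem_univ i)
  exact ((hA _ _ hi).trans hfactor).mul_left _

theorem RingHom.map_det_eq_prod_diag {S : Type*} [CommRing S] (f : R →+* S)
    {A : Matrix ι ι R} (hA : ∀ i j, i ≠ j → f (A i j) = 0) :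
    f A.det = ∏ i, f (A i i) := by
  have hdiag : f.mapMatrix A = Matrix.diagonal fun i => f (A i i) := by
    ext i j
    by_cases hij : i = j
    · subst hij; simp
    · simp [hA i j hij, hij]
  rw [f.map_det, hdiag, Matrix.det_diagonal]

end DetTerms

section FormMatrix

variable {R : Type*} [CommRing R] (q t : R) {n : ℕ}

theorem sub_one_dvd_lkFormEntry {i j k l : ℕ} (h : ¬(i = k ∧ j = l)) :
    (q - 1) ∣ lkFormEntry q t i j k l := by
  unfold lkFormEntry
  split_ifs
  · exact ⟨-(q ^ 2 * t ^ 2), by ring⟩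
  · exact ⟨-1, by ring⟩
  · exact ⟨t, by ring⟩
  · exact ⟨q ^ 2 * t, by ring⟩
  · exact ⟨-(t * (q - 1) * (1 + q * t)), by ring⟩
  · exact ⟨(q - 1) * (1 + q * t), by ring⟩
  · exact dvd_zero _

theorem sub_one_dvd_lkFormMat_of_ne {p p' : LKIdx n} (h : p ≠ p') :
    (q - 1) ∣ lkFormMat q t n p p' := by
  refine sub_one_dvd_lkFormEntry q t fun ⟨h₁, h₂⟩ => h ?_
  exact Subtype.ext (Prod.ext (Fin.ext h₁) (Fin.ext h₂))

theorem prod_lkFormMat_diag :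
    ∏ p : LKIdx n, lkFormMat q t n p p = ((1 - q * t) * (1 + q ^ 2 * t)) ^ n.choose 2 := by
  simp [lkFormMat, lkFormEntry, Finset.prod_const, card_lkIdx]

end FormMatrix

noncomputable def evalOneTwo : LKRing →+* ℚ :=
  eval₂ (eval₂ (Int.castRingHom ℚ) (Units.mk0 2 two_ne_zero)) 1

theorem evalOneTwo_qLK : evalOneTwo qLK = 1 := by
  simp [evalOneTwo, qLK]

theorem evalOneTwo_tLK : evalOneTwo tLK = 2 := by
  simp [evalOneTwo, tLK]

/-- In the permutation expansion of `det M`, the identity term equals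
`((1-qt)(1+q²t))^{C(n,2)}`, every other term is divisible by `q-1`, and
consequently `det M ≠ 0`. -/
theorem lk_form_det_expansion (n : ℕ) :
    ((Equiv.Perm.sign (1 : Equiv.Perm (LKIdx n)) : ℤ) •
        ∏ p : LKIdx n, lkFormMat qLK tLK n ((1 : Equiv.Perm (LKIdx n)) p) p =
      ((1 - qLK * tLK) * (1 + qLK ^ 2 * tLK)) ^ n.choose 2) ∧
    (∀ σ : Equiv.Perm (LKIdx n), σ ≠ 1 →
      (qLK - 1) ∣ (Equiv.Perm.sign σ : ℤ) • ∏ p : LKIdx n, lkFormMat qLK tLK n (σ p) p) ∧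
    (lkFormMat qLK tLK n).det ≠ 0 := by
  have hoff : ∀ p p' : LKIdx n, p ≠ p' → (qLK - 1) ∣ lkFormMat qLK tLK n p p' :=
    fun _ _ => sub_one_dvd_lkFormMat_of_ne qLK tLK
  have hdet : evalOneTwo (lkFormMat qLK tLK n).det = (-3) ^ n.choose 2 := by
    rw [evalOneTwo.map_det_eq_prod_diag, ← map_prod, prod_lkFormMat_diag]
    · simp only [map_pow, map_mul, map_sub, map_add, map_one, evalOneTwo_qLK, evalOneTwo_tLK]
      norm_num
    · intro p p' hpp'
      obtain ⟨c, hc⟩ := hoff p p' hpp'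
      simp [hc, evalOneTwo_qLK]
  refine ⟨by simp [prod_lkFormMat_diag],
    fun σ hσ => Matrix.dvd_sign_smul_prod_of_ne_one hoff hσ, fun h => ?_⟩
  rw [h, map_zero] at hdet
  exact pow_ne_zero _ (by norm_num) hdet.symm
end

section
/- For complex q, t on the unit circle with |q - 1| < 1/(2n⁴ + 6n³) and |t - i| < 1/(2n⁴ + 6n³) (where i is the imaginary unit and n ≥ 2), the Hermitian form on ℂ^{C(n,2)} given by H(v,v) = Σ_{i<j} |λ_{i,j}|² + 2·Re((q-1)/((1-qt)(1+q²t)) · k(λ)) is positive definite, where k(λ) = Σ_{a=c, b>d or b=d, c<a} λ_{a,b}·conj(λ_{c,d}) + Σ_{a=d} q²t·λ_{a,b}·conj(λ_{c,d}) + Σ_{c<a<d<b} (q-1)(1+qt)·λ_{a,b}·conj(λ_{c,d}). -/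
open Complex Finset

/-- The quantity `k(λ)`:
`k = Σ_{a=c, b>d or b=d, c<a} λ_{a,b} conj(λ_{c,d}) + Σ_{a=d} q²t λ_{a,b} conj(λ_{c,d})
   + Σ_{c<a<d<b} (q-1)(1+qt) λ_{a,b} conj(λ_{c,d})`. -/
noncomputable def lkK {n : ℕ} (q t : ℂ) (l : LKIdx n → ℂ) : ℂ :=
  (∑ p : LKIdx n, ∑ p' : LKIdx n,
      if (p.1.1 = p'.1.1 ∧ p'.1.2 < p.1.2) ∨ (p.1.2 = p'.1.2 ∧ p'.1.1 < p.1.1) then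
        l p * (starRingEnd ℂ) (l p') else 0) +
  (∑ p : LKIdx n, ∑ p' : LKIdx n,
      if (p.1.1 : ℕ) = (p'.1.2 : ℕ) then q ^ 2 * t * (l p * (starRingEnd ℂ) (l p')) else 0) +
  (∑ p : LKIdx n, ∑ p' : LKIdx n,
      if p'.1.1 < p.1.1 ∧ p.1.1 < p'.1.2 ∧ p'.1.2 < p.1.2 then
        (q - 1) * (1 + q * t) * (l p * (starRingEnd ℂ) (l p')) else 0)

lemma lk_double_sum_abs_le {n : ℕ} (c : ℂ) (hc : ‖c‖ ≤ 1)
    (P : LKIdx n → LKIdx n → Prop) [∀ p p', Decidable (P p p')] (l : LKIdx n → ℂ) :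
    ‖∑ p : LKIdx n, ∑ p' : LKIdx n,
        if P p p' then c * (l p * (starRingEnd ℂ) (l p')) else 0‖
      ≤ (∑ p : LKIdx n, ‖l p‖) ^ 2 := by
  calc ‖∑ p : LKIdx n, ∑ p' : LKIdx n,
        if P p p' then c * (l p * (starRingEnd ℂ) (l p')) else 0‖
      ≤ ∑ p : LKIdx n, ∑ p' : LKIdx n, ‖if P p p' then c * (l p * (starRingEnd ℂ) (l p')) else 0‖ := by
        refine (norm_sum_le _ _).trans (Finset.sum_le_sum fun p _ => ?_)
        exact norm_sum_le _ _
    _ ≤ ∑ p : LKIdx n, ∑ p' : LKIdx n, ‖l p‖ * ‖l p'‖ := by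
        refine Finset.sum_le_sum fun p _ => Finset.sum_le_sum fun p' _ => ?_
        split_ifs with h
        · rw [norm_mul, norm_mul, Complex.norm_conj]
          calc ‖c‖ * (‖l p‖ * ‖l p'‖)
              ≤ 1 * (‖l p‖ * ‖l p'‖) := by
                apply mul_le_mul_of_nonneg_right hc; positivity
            _ = _ := one_mul _
        · simp; positivity
    _ = (∑ p : LKIdx n, ‖l p‖) ^ 2 := by
        rw [sq, Finset.sum_mul_sum]


set_option maxHeartbeats 1000000 in
/-- For `q, t` on the unit circle with `|q-1| < 1/(2n⁴+6n³)` and `|t-i| < 1/(2n⁴+6n³)`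
(`n ≥ 2`), the Hermitian form
`H(v,v) = Σ_{i<j} |λ_{i,j}|² + 2 Re((q-1)/((1-qt)(1+q²t)) · k(λ))` is positive definite. -/
theorem lk_form_positive_definite (n : ℕ) (hn : 2 ≤ n) (q t : ℂ)
    (hq : ‖q‖ = 1) (ht : ‖t‖ = 1)
    (hq1 : ‖q - 1‖ < 1 / (2 * (n : ℝ) ^ 4 + 6 * (n : ℝ) ^ 3))
    (hti : ‖t - Complex.I‖ < 1 / (2 * (n : ℝ) ^ 4 + 6 * (n : ℝ) ^ 3))
    (hqt : q * t ≠ 1) (hq2t : q ^ 2 * t ≠ -1)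
    (l : LKIdx n → ℂ) (hl : l ≠ 0) :
    0 < (∑ p : LKIdx n, ‖l p‖ ^ 2) +
        2 * (((q - 1) / ((1 - q * t) * (1 + q ^ 2 * t))) * lkK q t l).re := by
  set D : ℝ := 2 * (n : ℝ) ^ 4 + 6 * (n : ℝ) ^ 3 with hD
  have hn2 : (2:ℝ) ≤ (n:ℝ) := by exact_mod_cast hn
  have hD80 : (80:ℝ) ≤ D := by
    have h4 : (16:ℝ) ≤ (n:ℝ) ^ 4 := by
      calc (16:ℝ) = 2 ^ 4 := by norm_num
        _ ≤ (n:ℝ) ^ 4 := pow_le_pow_left₀ (by norm_num) hn2 4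
    have h3 : (8:ℝ) ≤ (n:ℝ) ^ 3 := by
      calc (8:ℝ) = 2 ^ 3 := by norm_num
        _ ≤ (n:ℝ) ^ 3 := pow_le_pow_left₀ (by norm_num) hn2 3
    rw [hD]; linarith
  have hDpos : (0:ℝ) < D := by linarith
  have hε80 : 1 / D ≤ 1 / 80 := one_div_le_one_div_of_le (by norm_num) hD80
  have hq1' : ‖q - 1‖ ≤ 1 / D := le_of_lt hq1
  have hti' : ‖t - I‖ ≤ 1 / D := le_of_lt hti
  -- sqrt 2 bound
  have hs2 : (1.4:ℝ) ≤ Real.sqrt 2 := by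
    have h1 := Real.sq_sqrt (show (0:ℝ) ≤ 2 by norm_num)
    have h2 := Real.sqrt_nonneg 2
    nlinarith
  -- |qt - I| ≤ 2/D
  have hqtI : ‖q * t - I‖ ≤ 2 / D := by
    calc ‖q * t - I‖ = ‖q * (t - I) + (q - 1) * I‖ := by ring_nf
      _ ≤ ‖q * (t - I)‖ + ‖(q - 1) * I‖ := norm_add_le _ _
      _ = ‖t - I‖ + ‖q - 1‖ := by
          rw [norm_mul, norm_mul, hq, Complex.norm_I, one_mul, mul_one]
      _ ≤ 2 / D := by rw [div_eq_mul_one_div]; linarith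
  -- |q² - 1| ≤ 2/D
  have hq21 : ‖q ^ 2 - 1‖ ≤ 2 / D := by
    calc ‖q ^ 2 - 1‖ = ‖q - 1‖ * ‖q + 1‖ := by
          rw [← norm_mul]; ring_nf
      _ ≤ (1/D) * 2 := by
          apply mul_le_mul hq1' ?_ (norm_nonneg _) (by positivity)
          calc ‖q + 1‖ ≤ ‖q‖ + ‖1‖ := norm_add_le _ _
            _ = 2 := by rw [hq, norm_one]; norm_num
      _ = 2 / D := by ring
  -- |q²t - I| ≤ 3/D
  have hq2tI : ‖q ^ 2 * t - I‖ ≤ 3 / D := by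
    calc ‖q ^ 2 * t - I‖ = ‖q ^ 2 * (t - I) + (q ^ 2 - 1) * I‖ := by
          ring_nf
      _ ≤ ‖q ^ 2 * (t - I)‖ + ‖(q ^ 2 - 1) * I‖ := norm_add_le _ _
      _ = ‖t - I‖ + ‖q ^ 2 - 1‖ := by
          rw [norm_mul, norm_mul, norm_pow, hq, Complex.norm_I, one_pow, one_mul, mul_one]
      _ ≤ 3 / D := by
          have : (3:ℝ)/D = 1/D + 2/D := by ring
          rw [this]; linarith
  have habs1I : ‖1 - I‖ = Real.sqrt 2 := by
    rw [Complex.norm_def, Complex.normSq_apply]; norm_num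
  have habs1I' : ‖1 + I‖ = Real.sqrt 2 := by
    rw [Complex.norm_def, Complex.normSq_apply]; norm_num
  have h2D : 2 / D ≤ 2 / 80 := by
    apply div_le_div_of_nonneg_left (by norm_num) (by norm_num) hD80
  have h3D : 3 / D ≤ 3 / 80 := by
    apply div_le_div_of_nonneg_left (by norm_num) (by norm_num) hD80
  -- |1 - qt| ≥ 1
  have h1qt : (1:ℝ) ≤ ‖1 - q * t‖ := by
    have tri : ‖1 - I‖ ≤ ‖1 - q * t‖ + ‖q * t - I‖ := by
      calc ‖1 - I‖ = ‖(1 - q * t) + (q * t - I)‖ := by ring_nf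
        _ ≤ _ := norm_add_le _ _
    rw [habs1I] at tri; linarith
  -- |1 + q²t| ≥ 1
  have h1q2t : (1:ℝ) ≤ ‖1 + q ^ 2 * t‖ := by
    have tri : ‖1 + I‖ ≤ ‖1 + q ^ 2 * t‖ + ‖q ^ 2 * t - I‖ := by
      calc ‖1 + I‖ = ‖(1 + q ^ 2 * t) + (I - q ^ 2 * t)‖ := by ring_nf
        _ ≤ ‖1 + q ^ 2 * t‖ + ‖I - q ^ 2 * t‖ := norm_add_le _ _
        _ = ‖1 + q ^ 2 * t‖ + ‖q ^ 2 * t - I‖ := by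
            rw [← norm_neg (I - q ^ 2 * t)]; ring_nf
    rw [habs1I'] at tri; linarith
  -- |c| ≤ 1/D
  set c : ℂ := (q - 1) / ((1 - q * t) * (1 + q ^ 2 * t)) with hc
  have hcabs : ‖c‖ ≤ 1 / D := by
    rw [hc, norm_div, norm_mul]
    have hd1 : (1:ℝ) ≤ ‖1 - q * t‖ * ‖1 + q ^ 2 * t‖ := by nlinarith
    calc ‖q - 1‖ / (‖1 - q * t‖ * ‖1 + q ^ 2 * t‖)
        ≤ ‖q - 1‖ / 1 := by
          apply div_le_div_of_nonneg_left (norm_nonneg _) (by norm_num) hd1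
      _ ≤ 1 / D := by rw [div_one]; exact hq1'
  -- |k| ≤ 3 T²
  set T : ℝ := ∑ p : LKIdx n, ‖l p‖ with hT
  have hkabs : ‖lkK q t l‖ ≤ 3 * T ^ 2 := by
    have b1 : ‖∑ p : LKIdx n, ∑ p' : LKIdx n,
        if (p.1.1 = p'.1.1 ∧ p'.1.2 < p.1.2) ∨ (p.1.2 = p'.1.2 ∧ p'.1.1 < p.1.1) then
          l p * (starRingEnd ℂ) (l p') else 0‖ ≤ T ^ 2 := by
      have := lk_double_sum_abs_le (n := n) 1 (by simp)
        (fun p p' => (p.1.1 = p'.1.1 ∧ p'.1.2 < p.1.2) ∨ (p.1.2 = p'.1.2 ∧ p'.1.1 < p.1.1)) l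
      simpa using this
    have b2 : ‖∑ p : LKIdx n, ∑ p' : LKIdx n,
        if (p.1.1 : ℕ) = (p'.1.2 : ℕ) then q ^ 2 * t * (l p * (starRingEnd ℂ) (l p')) else 0‖
        ≤ T ^ 2 := by
      have habs : ‖q ^ 2 * t‖ ≤ 1 := by
        rw [norm_mul, norm_pow, hq, ht]; norm_num
      have := lk_double_sum_abs_le (n := n) (q ^ 2 * t) habs
        (fun p p' => (p.1.1 : ℕ) = (p'.1.2 : ℕ)) l
      simpa [mul_assoc] using this
    have b3 : ‖∑ p : LKIdx n, ∑ p' : LKIdx n,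
        if p'.1.1 < p.1.1 ∧ p.1.1 < p'.1.2 ∧ p'.1.2 < p.1.2 then
          (q - 1) * (1 + q * t) * (l p * (starRingEnd ℂ) (l p')) else 0‖ ≤ T ^ 2 := by
      have habs : ‖(q - 1) * (1 + q * t)‖ ≤ 1 := by
        rw [norm_mul]
        have h1 : ‖1 + q * t‖ ≤ 2 := by
          calc ‖1 + q * t‖ ≤ ‖1‖ + ‖q * t‖ :=
              norm_add_le _ _
            _ = 2 := by rw [norm_one, norm_mul, hq, ht]; norm_num
        have : ‖q - 1‖ ≤ 1/80 := le_trans hq1' hε80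
        nlinarith [norm_nonneg (q - 1)]
      have := lk_double_sum_abs_le (n := n) ((q - 1) * (1 + q * t)) habs
        (fun p p' => p'.1.1 < p.1.1 ∧ p.1.1 < p'.1.2 ∧ p'.1.2 < p.1.2) l
      simpa using this
    calc ‖lkK q t l‖ ≤ _ + _ + _ :=
        le_trans (norm_add_le _ _) (add_le_add_left (norm_add_le _ _) _)
      _ ≤ T ^ 2 + T ^ 2 + T ^ 2 := add_le_add (add_le_add b1 b2) b3
      _ = 3 * T ^ 2 := by ring
  -- Cauchy-Schwarz
  set S : ℝ := ∑ p : LKIdx n, ‖l p‖ ^ 2 with hS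
  have hCS : T ^ 2 ≤ ((Fintype.card (LKIdx n) : ℕ) : ℝ) * S := by
    have h := sq_sum_le_card_mul_sum_sq (s := (Finset.univ : Finset (LKIdx n)))
      (f := fun p => ‖l p‖)
    rw [Finset.card_univ] at h
    exact h
  have hNle : ((Fintype.card (LKIdx n) : ℕ) : ℝ) ≤ (n : ℝ) ^ 2 := by
    have h : Fintype.card (LKIdx n) ≤ n * n := by
      have h := Fintype.card_le_of_injective (α := LKIdx n) Subtype.val Subtype.val_injective
      simpa using h
    calc ((Fintype.card (LKIdx n) : ℕ) : ℝ) ≤ ((n * n : ℕ) : ℝ) := by exact_mod_cast h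
      _ = (n : ℝ) ^ 2 := by push_cast; ring
  have hSpos : 0 < S := by
    obtain ⟨p, hp⟩ := Function.ne_iff.mp hl
    have h1 : ‖l p‖ ^ 2 ≤ S :=
      Finset.single_le_sum (f := fun p => ‖l p‖ ^ 2)
        (fun i _ => by positivity) (Finset.mem_univ p)
    have h2 : 0 < ‖l p‖ ^ 2 := by
      have := norm_pos_iff.mpr hp; positivity
    linarith
  have hSnonneg : 0 ≤ S := le_of_lt hSpos
  -- real part bound
  have hre : -(‖c * lkK q t l‖) ≤ (c * lkK q t l).re := by
    have h1 := Complex.abs_re_le_norm (c * lkK q t l)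
    have h2 := neg_abs_le (c * lkK q t l).re
    rw [abs_le] at h1
    linarith [h1.1]
  have hprod : ‖c * lkK q t l‖ ≤ (1 / D) * (3 * (((Fintype.card (LKIdx n) : ℕ) : ℝ) * S)) := by
    rw [norm_mul]
    apply mul_le_mul hcabs ?_ (norm_nonneg _) (by positivity)
    calc ‖lkK q t l‖ ≤ 3 * T ^ 2 := hkabs
      _ ≤ 3 * (((Fintype.card (LKIdx n) : ℕ) : ℝ) * S) := by linarith
  -- final: 6 N / D < 1
  have hkey : 6 * ((Fintype.card (LKIdx n) : ℕ) : ℝ) / D < 1 := by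
    rw [div_lt_one hDpos]
    have h1 : 6 * ((Fintype.card (LKIdx n) : ℕ) : ℝ) ≤ 6 * (n:ℝ)^2 := by linarith
    have h2 : 6 * (n:ℝ)^2 < D := by
      rw [hD]
      nlinarith [sq_nonneg ((n:ℝ) - 1), sq_nonneg (n:ℝ)]
    linarith
  have hmain : (1 / D) * (3 * (((Fintype.card (LKIdx n) : ℕ) : ℝ) * S)) < S / 2 := by
    have hNnn : (0:ℝ) ≤ ((Fintype.card (LKIdx n) : ℕ) : ℝ) := Nat.cast_nonneg _
    have h1 : (1 / D) * (3 * (((Fintype.card (LKIdx n) : ℕ) : ℝ) * S)) = (6 * ((Fintype.card (LKIdx n) : ℕ) : ℝ) / D) * (S / 2) := by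
      field_simp; ring
    rw [h1]
    have : (6 * ((Fintype.card (LKIdx n) : ℕ) : ℝ) / D) * (S / 2) < 1 * (S / 2) := by
      apply mul_lt_mul_of_pos_right hkey; linarith
    linarith
  have : -(S/2) < (c * lkK q t l).re := by
    have := hre
    have habs : ‖c * lkK q t l‖ < S / 2 := lt_of_le_of_lt hprod hmain
    linarith
  linarith
end
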